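/- arXiv:2306.12716 — 2 statements merged into one kernel-verified Lean document; each statement's English description precedes it below -/
import Mathlib

section
/- (Order preservation of the local time flow; regularity condition (iii) in the proof of Proposition 2.5.) Let X : J → ℝ be continuous on an interval J and admit an occupation density L, and for r ∈ ℝ, a ≥ 0 set τ_a^r := inf{ t ∈ J : L(t,r) > a }, with inf ∅ = +∞ and L(+∞, x) := sup_{t∈J} L(t,x). Then for all r', r ∈ ℝ and a', a ≥ 0: if L(τ_{a'}^{r'}, r) > a then L(τ_{a'}^{r'}, x) ≥ L(τ_a^r, x) for every x ∈ ℝ; and if L(τ_{a'}^{r'}, r) < a then L(τ_{a'}^{r'}, x) ≤ L(τ_a^r, x) for every x ∈ ℝ. -/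
open MeasureTheory Set
open scoped ENNReal Classical

noncomputable section

/-- A continuous function `X : J → ℝ` admits occupation density `L`. -/
def HasOccDensity (J : Set ℝ) (X : ℝ → ℝ) (L : ℝ → ℝ → ℝ) : Prop :=
  ContinuousOn X J ∧
  ContinuousOn (fun p : ℝ × ℝ => L p.1 p.2) (J ×ˢ (univ : Set ℝ)) ∧
  (∀ x : ℝ, MonotoneOn (fun t => L t x) J) ∧
  (∀ t ∈ J, ∀ x : ℝ, 0 ≤ L t x) ∧
  (∀ t ∈ J, ∀ h : ℝ → ℝ≥0∞, Measurable h →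
    ∫⁻ s in J ∩ Iic t, h (X s) = ∫⁻ x, h x * ENNReal.ofReal (L t x))

/-- Inverse local time `τ_a^r = inf { t ∈ D : Λ(t,r) > a }`, valued in `EReal`
(with the convention `inf ∅ = +∞`). -/
def tauE (D : Set ℝ) (Λ : ℝ → ℝ → ℝ) (r a : ℝ) : EReal :=
  sInf ((fun t : ℝ => (t : EReal)) '' {t | t ∈ D ∧ a < Λ t r})

/-- Evaluation of `Λ(·,x)` at an extended time `e`, with the conventions
`Λ(+∞,x) = sup_{t ∈ D} Λ(t,x)` and the limiting (infimum) value at the left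
boundary of `D`; valued in `[0,∞]`. -/
def evalOccE (D : Set ℝ) (Λ : ℝ → ℝ → ℝ) (x : ℝ) (e : EReal) : ℝ≥0∞ :=
  if e = ⊤ then ⨆ t ∈ D, ENNReal.ofReal (Λ t x)
  else if e ≠ ⊥ ∧ e.toReal ∈ D then ENNReal.ofReal (Λ e.toReal x)
  else ⨅ t ∈ D, ENNReal.ofReal (Λ t x)

lemma ereal_trichotomy (e : EReal) : e = ⊥ ∨ e = ⊤ ∨ ∃ c : ℝ, e = (c : EReal) := by
  induction e using EReal.rec with
  | bot => exact Or.inl rfl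
  | coe c => exact Or.inr (Or.inr ⟨c, rfl⟩)
  | top => exact Or.inr (Or.inl rfl)

lemma ofReal_lt_imp {a b : ℝ} (h : ENNReal.ofReal a < ENNReal.ofReal b) : a < b :=
  lt_of_not_ge fun hb => absurd (ENNReal.ofReal_le_ofReal hb) (not_le_of_gt h)

section tauLemmas
variable (J : Set ℝ) (L : ℝ → ℝ → ℝ)

lemma tau_le_coe {r a t : ℝ} (ht : t ∈ J) (hlt : a < L t r) :
    tauE J L r a ≤ (t : EReal) :=
  sInf_le ⟨t, ⟨ht, hlt⟩, rfl⟩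

lemma coe_le_tau {r a : ℝ} {c : EReal} (h : ∀ t ∈ J, a < L t r → c ≤ (t : EReal)) :
    c ≤ tauE J L r a := by
  refine le_sInf ?_
  rintro y ⟨t, ⟨ht, hlt⟩, rfl⟩
  exact h t ht hlt

lemma tau_le_tau_of_all {r' r a' a : ℝ} (hall : ∀ t ∈ J, a < L t r) :
    tauE J L r a ≤ tauE J L r' a' :=
  coe_le_tau J L fun t ht _ => tau_le_coe J L ht (hall t ht)

lemma tau_cases (hJ : J.OrdConnected) (r a : ℝ) :
    tauE J L r a = ⊥ ∨ tauE J L r a = ⊤ ∨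
      ∃ c : ℝ, tauE J L r a = (c : EReal) ∧ (c ∈ J ∨ ∀ t ∈ J, c ≤ t) := by
  rcases ereal_trichotomy (tauE J L r a) with h | h | ⟨c, hc⟩
  · exact Or.inl h
  · exact Or.inr (Or.inl h)
  · refine Or.inr (Or.inr ⟨c, hc, ?_⟩)
    by_cases hcJ : ∀ t ∈ J, c ≤ t
    · exact Or.inr hcJ
    · push_neg at hcJ
      obtain ⟨t0, ht0, hlt0⟩ := hcJ
      have hSne : {t | t ∈ J ∧ a < L t r}.Nonempty := by
        by_contra hS
        rw [Set.not_nonempty_iff_eq_empty] at hS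
        rw [tauE, hS, Set.image_empty, sInf_empty] at hc
        exact (EReal.coe_ne_top c) hc.symm
      obtain ⟨s, hsJ, hs⟩ := hSne
      have hcs : c ≤ s := by
        have h2 := tau_le_coe J L hsJ hs
        rw [hc] at h2
        exact_mod_cast h2
      exact Or.inl (hJ.out ht0 hsJ ⟨hlt0.le, hcs⟩)

variable (x : ℝ)

lemma evalOccE_top : evalOccE J L x ⊤ = ⨆ t ∈ J, ENNReal.ofReal (L t x) := if_pos rfl

lemma evalOccE_bot : evalOccE J L x ⊥ = ⨅ t ∈ J, ENNReal.ofReal (L t x) := by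
  rw [evalOccE, if_neg (by simp), if_neg (fun h => h.1 rfl)]

lemma evalOccE_coe_mem {c : ℝ} (hc : c ∈ J) :
    evalOccE J L x (c : EReal) = ENNReal.ofReal (L c x) := by
  rw [evalOccE, if_neg (EReal.coe_ne_top c),
    if_pos ⟨EReal.coe_ne_bot c, by rwa [EReal.toReal_coe]⟩, EReal.toReal_coe]

lemma evalOccE_coe_notMem {c : ℝ} (hc : c ∉ J) :
    evalOccE J L x (c : EReal) = ⨅ t ∈ J, ENNReal.ofReal (L t x) := by
  rw [evalOccE, if_neg (EReal.coe_ne_top c), if_neg]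
  rintro ⟨-, hmem⟩
  rw [EReal.toReal_coe] at hmem
  exact hc hmem

lemma evalOccE_mono (hJne : J.Nonempty)
    (hmono : ∀ y : ℝ, MonotoneOn (fun t => L t y) J) {e e' : EReal}
    (he : e = ⊥ ∨ e = ⊤ ∨ ∃ c : ℝ, e = (c : EReal) ∧ (c ∈ J ∨ ∀ t ∈ J, c ≤ t))
    (he' : e' = ⊥ ∨ e' = ⊤ ∨ ∃ c : ℝ, e' = (c : EReal) ∧ (c ∈ J ∨ ∀ t ∈ J, c ≤ t))
    (h : e ≤ e') :
    evalOccE J L x e ≤ evalOccE J L x e' := by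
  obtain ⟨t0, ht0⟩ := hJne
  have hinfle : ∀ t ∈ J, (⨅ s ∈ J, ENNReal.ofReal (L s x)) ≤ ENNReal.ofReal (L t x) :=
    fun t ht => biInf_le _ ht
  have hlesup : ∀ t ∈ J, ENNReal.ofReal (L t x) ≤ ⨆ s ∈ J, ENNReal.ofReal (L s x) :=
    fun t ht => le_biSup (fun s => ENNReal.ofReal (L s x)) ht
  have hinfsup : (⨅ s ∈ J, ENNReal.ofReal (L s x)) ≤ ⨆ s ∈ J, ENNReal.ofReal (L s x) :=
    (hinfle t0 ht0).trans (hlesup t0 ht0)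
  rcases he' with rfl | rfl | ⟨c', rfl, hc'⟩
  · rw [le_bot_iff.mp h]
  · rw [evalOccE_top]
    rcases he with rfl | rfl | ⟨c, rfl, hc⟩
    · rw [evalOccE_bot]; exact hinfsup
    · rw [evalOccE_top]
    · by_cases hcJ : c ∈ J
      · rw [evalOccE_coe_mem J L x hcJ]; exact hlesup c hcJ
      · rw [evalOccE_coe_notMem J L x hcJ]; exact hinfsup
  · by_cases hc'J : c' ∈ J
    · rw [evalOccE_coe_mem J L x hc'J]
      rcases he with rfl | rfl | ⟨c, rfl, hc⟩
      · rw [evalOccE_bot]; exact hinfle c' hc'J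
      · exact absurd (top_le_iff.mp h) (EReal.coe_ne_top c')
      · have hcc' : c ≤ c' := by exact_mod_cast h
        by_cases hcJ : c ∈ J
        · rw [evalOccE_coe_mem J L x hcJ]
          exact ENNReal.ofReal_le_ofReal (hmono x hcJ hc'J hcc')
        · rw [evalOccE_coe_notMem J L x hcJ]; exact hinfle c' hc'J
    · have hlb' : ∀ t ∈ J, c' ≤ t := hc'.resolve_left hc'J
      rw [evalOccE_coe_notMem J L x hc'J]
      rcases he with rfl | rfl | ⟨c, rfl, hc⟩
      · rw [evalOccE_bot]
      · exact absurd (top_le_iff.mp h) (EReal.coe_ne_top c')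
      · by_cases hcJ : c ∈ J
        · have hcc' : c ≤ c' := by exact_mod_cast h
          have : c = c' := le_antisymm hcc' (hlb' c hcJ)
          exact absurd (this ▸ hcJ) hc'J
        · rw [evalOccE_coe_notMem J L x hcJ]

lemma tau_le_tau (hJ : J.OrdConnected) {r' r a' a : ℝ}
    (h : ENNReal.ofReal a < evalOccE J L r (tauE J L r' a')) :
    tauE J L r a ≤ tauE J L r' a' := by
  rcases tau_cases J L hJ r' a' with hb | ht | ⟨c, hc, hcJ⟩
  · rw [hb, evalOccE_bot] at h
    refine le_trans (tau_le_tau_of_all J L fun t ht => ?_) le_rfl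
    exact ofReal_lt_imp (h.trans_le (biInf_le _ ht))
  · rw [ht]; exact le_top
  · by_cases hmem : c ∈ J
    · rw [hc, evalOccE_coe_mem J L r hmem] at h
      rw [hc]
      exact tau_le_coe J L hmem (ofReal_lt_imp h)
    · rw [hc, evalOccE_coe_notMem J L r hmem] at h
      exact tau_le_tau_of_all J L fun t ht => ofReal_lt_imp (h.trans_le (biInf_le _ ht))

lemma tau'_le_tau (hJ : J.OrdConnected)
    (hmono : ∀ y : ℝ, MonotoneOn (fun t => L t y) J) {r' r a' a : ℝ}
    (h : evalOccE J L r (tauE J L r' a') < ENNReal.ofReal a) :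
    tauE J L r' a' ≤ tauE J L r a := by
  rcases tau_cases J L hJ r' a' with hb | ht | ⟨c, hc, hcJ⟩
  · rw [hb]; exact bot_le
  · rw [ht, evalOccE_top] at h
    rw [ht]
    refine coe_le_tau J L fun t htJ hlt => ?_
    exact absurd hlt (not_lt_of_ge (ofReal_lt_imp ((le_biSup (fun s => ENNReal.ofReal (L s r)) htJ).trans_lt h)).le)
  · by_cases hmem : c ∈ J
    · rw [hc, evalOccE_coe_mem J L r hmem] at h
      have hLc : L c r < a := ofReal_lt_imp h
      rw [hc]
      refine coe_le_tau J L fun t htJ hlt => ?_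
      refine EReal.coe_le_coe_iff.mpr ?_
      by_contra hct
      push_neg at hct
      have := hmono r htJ hmem hct.le
      simp only at this
      linarith
    · have hlb : ∀ t ∈ J, c ≤ t := hcJ.resolve_left hmem
      rw [hc]
      exact coe_le_tau J L fun t htJ _ => EReal.coe_le_coe_iff.mpr (hlb t htJ)

end tauLemmas

/-- order preservation of the local time flow, regularity (iii) in the
proof of Proposition 2.5. If `L(τ_{a'}^{r'}, r) > a` then
`L(τ_{a'}^{r'}, x) ≥ L(τ_a^r, x)` for every `x`, and if `L(τ_{a'}^{r'}, r) < a` then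
`L(τ_{a'}^{r'}, x) ≤ L(τ_a^r, x)` for every `x`. -/
theorem localtime_flow_order_preservation
    (J : Set ℝ) (hJ : J.OrdConnected)
    (X : ℝ → ℝ) (L : ℝ → ℝ → ℝ) (hXL : HasOccDensity J X L)
    (r' r : ℝ) (a' a : ℝ) (ha' : 0 ≤ a') (ha : 0 ≤ a) :
    (ENNReal.ofReal a < evalOccE J L r (tauE J L r' a') →
      ∀ x : ℝ, evalOccE J L x (tauE J L r a) ≤ evalOccE J L x (tauE J L r' a')) ∧
    (evalOccE J L r (tauE J L r' a') < ENNReal.ofReal a →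
      ∀ x : ℝ, evalOccE J L x (tauE J L r' a') ≤ evalOccE J L x (tauE J L r a)) := by
  obtain hJe | hJne := J.eq_empty_or_nonempty
  · have htau : ∀ (R A : ℝ), tauE J L R A = ⊤ := by
      intro R A
      have hS : {t | t ∈ J ∧ A < L t R} = ∅ := by rw [hJe]; ext t; simp
      rw [tauE, hS, Set.image_empty, sInf_empty]
    constructor <;> intro _ x <;> rw [htau r a, htau r' a']
  · have hmono := hXL.2.2.1
    exact ⟨fun h x => evalOccE_mono J L x hJne hmono
        (tau_cases J L hJ r a) (tau_cases J L hJ r' a') (tau_le_tau J L hJ h),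
      fun h x => evalOccE_mono J L x hJne hmono
        (tau_cases J L hJ r' a') (tau_cases J L hJ r a) (tau'_le_tau J L hJ hmono h)⟩
end
end

section
/- (Deterministic version of the perfect flow property of Appendix A.) Let X : J → ℝ be continuous on an interval J and admit an occupation density L. Assume the accumulation property: for all x ∈ ℝ and all s < t in J, if X_u = x for some u ∈ [s,t) then L(t,x) > L(s,x). For r, x ∈ ℝ and a ≥ 0 set τ_a^r := inf{ t ∈ J : L(t,r) > a } (inf ∅ = +∞, L(+∞, y) := sup_{t∈J} L(t,y)) and S_{r,x}(a) := L(τ_a^r, x). Then for all levels r ≤ x ≤ y and all a ≥ 0, S_{r,y}(a) = S_{x,y}(S_{r,x}(a)), i.e. L(τ_a^r, y) = L(τ_b^x, y) where b := L(τ_a^r, x). -/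
open MeasureTheory Set
open scoped ENNReal Classical

noncomputable section

/-- Inverse local time `τ_a^r = inf { t ∈ D : Λ(t,r) > a }` for an extended local-time
level `a ∈ [0,∞]`, valued in `EReal` (convention `inf ∅ = +∞`). -/
def tauENN (D : Set ℝ) (Λ : ℝ → ℝ → ℝ) (r : ℝ) (a : ℝ≥0∞) : EReal :=
  sInf ((fun t : ℝ => (t : EReal)) '' {t | t ∈ D ∧ a < ENNReal.ofReal (Λ t r)})

/-- The local time flow `S_{r,x}(a) = Λ(τ_a^r, x)` with extended level `a`. -/
def SflowE (D : Set ℝ) (Λ : ℝ → ℝ → ℝ) (r x : ℝ) (a : ℝ≥0∞) : ℝ≥0∞ :=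
  evalOccE D Λ x (tauENN D Λ r a)

section Aux

variable {J : Set ℝ} {X : ℝ → ℝ} {L : ℝ → ℝ → ℝ}

lemma contL_snd (hXL : HasOccDensity J X L) {t : ℝ} (ht : t ∈ J) :
    Continuous (fun z => L t z) := by
  rw [← continuousOn_univ]
  exact hXL.2.1.comp ((continuous_const.prodMk continuous_id).continuousOn)
    (fun z _ => ⟨ht, mem_univ _⟩)

lemma contL_fst (hXL : HasOccDensity J X L) (z : ℝ) :
    ContinuousOn (fun t => L t z) J :=
  hXL.2.1.comp ((continuous_id.prodMk continuous_const).continuousOn)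
    (fun t ht => ⟨ht, mem_univ _⟩)

lemma cont_eq_zero_of_ae {f : ℝ → ℝ} (hf : Continuous f) {U : Set ℝ} (hU : IsOpen U)
    (hae : ∀ᵐ (z : ℝ) ∂volume, z ∈ U → f z = 0) : ∀ z ∈ closure U, f z = 0 := by
  intro z hz
  by_contra hne
  have hV : IsOpen {w : ℝ | f w ≠ 0} := isOpen_ne.preimage hf
  have hnonempty : ({w : ℝ | f w ≠ 0} ∩ U).Nonempty := mem_closure_iff.mp hz _ hV hne
  have hpos := (hV.inter hU).measure_pos volume hnonempty
  have hnull : volume {w : ℝ | ¬ (w ∈ U → f w = 0)} = 0 := ae_iff.mp hae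
  have hsub : {w : ℝ | f w ≠ 0} ∩ U ⊆ {w : ℝ | ¬ (w ∈ U → f w = 0)} := by
    rintro w ⟨hw1, hw2⟩; exact fun hcon => hw1 (hcon hw2)
  exact hpos.ne' (measure_mono_null hsub hnull)

lemma left_lim_eq {f : ℝ → ℝ} {s t c : ℝ} (hst : s < t)
    (hf : ContinuousWithinAt f (Ico s t) t) (h : ∀ u ∈ Ico s t, f u = c) : f t = c := by
  have hmem : t ∈ closure (Ico s t) := by
    rw [closure_Ico hst.ne]; exact ⟨hst.le, le_rfl⟩
  haveI := mem_closure_iff_nhdsWithin_neBot.mp hmem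
  refine tendsto_nhds_unique hf ?_
  apply Filter.Tendsto.congr' _ tendsto_const_nhds
  filter_upwards [self_mem_nhdsWithin] with u hu
  exact (h u hu).symm

lemma left_lim_le {f : ℝ → ℝ} {s t c : ℝ} (hst : s < t)
    (hf : ContinuousWithinAt f (Ico s t) t) (h : ∀ u ∈ Ico s t, f u ≤ c) : f t ≤ c := by
  have hmem : t ∈ closure (Ico s t) := by
    rw [closure_Ico hst.ne]; exact ⟨hst.le, le_rfl⟩
  haveI := mem_closure_iff_nhdsWithin_neBot.mp hmem
  exact le_of_tendsto hf (by filter_upwards [self_mem_nhdsWithin] with u hu using h u hu)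

lemma sign_dichotomy (hX : ContinuousOn X J) {R : Set ℝ} (hR : R ⊆ J)
    (hseg : ∀ u ∈ R, ∀ v ∈ R, Icc u v ⊆ R) {x : ℝ}
    (havoid : ∀ u ∈ R, X u ≠ x) :
    (∀ u ∈ R, X u < x) ∨ (∀ u ∈ R, x < X u) := by
  by_contra hcon
  push_neg at hcon
  obtain ⟨⟨u, huR, hux⟩, ⟨v, hvR, hvx⟩⟩ := hcon
  have hux' : x < X u := lt_of_le_of_ne hux (Ne.symm (havoid u huR))
  have hvx' : X v < x := lt_of_le_of_ne hvx (havoid v hvR)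
  rcases le_total u v with huv | hvu
  · obtain ⟨w, hw, hXw⟩ := intermediate_value_Icc' huv
      (hX.mono ((hseg u huR v hvR).trans hR)) ⟨hvx'.le, hux'.le⟩
    exact havoid w (hseg u huR v hvR hw) hXw
  · obtain ⟨w, hw, hXw⟩ := intermediate_value_Icc hvu
      (hX.mono ((hseg v hvR u huR).trans hR)) ⟨hvx'.le, hux'.le⟩
    exact havoid w (hseg v hvR u huR hw) hXw

/-- Key occupation-density lemma: if `X` avoids a bounded set `E` on the open time
interval `(s,t)`, then `L s` and `L t` agree a.e. on `E`. -/
lemma occ_ae_eq_of_avoid (hJ : J.OrdConnected) (hXL : HasOccDensity J X L)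
    {s t : ℝ} (hs : s ∈ J) (ht : t ∈ J) (hst : s ≤ t) {E : Set ℝ} (hE : MeasurableSet E)
    {c d : ℝ} (hEcd : E ⊆ Icc c d)
    (havoid : ∀ u, s < u → u < t → X u ∉ E) :
    ∀ᵐ (z : ℝ) ∂volume, z ∈ E → L s z = L t z := by
  obtain ⟨hX, hLcont, hmono, hpos, hocc⟩ := id hXL
  set h : ℝ → ℝ≥0∞ := E.indicator (fun _ => 1) with hh
  have hmeas_h : Measurable h := measurable_const.indicator hE
  have h1 := hocc s hs h hmeas_h
  have h2 := hocc t ht h hmeas_h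
  have hsplit : J ∩ Iic t = (J ∩ Iic s) ∪ Ioc s t := by
    apply Subset.antisymm
    · rintro u ⟨huJ, hut⟩
      rcases le_or_gt u s with h' | h'
      · exact Or.inl ⟨huJ, h'⟩
      · exact Or.inr ⟨h', hut⟩
    · rintro u (⟨huJ, hus⟩ | ⟨hsu, hut⟩)
      · exact ⟨huJ, hus.trans hst⟩
      · exact ⟨hJ.out hs ht ⟨hsu.le, hut⟩, hut⟩
  have hdisj : Disjoint (J ∩ Iic s) (Ioc s t) := by
    rw [disjoint_left]; rintro u ⟨_, hus⟩ ⟨hsu, _⟩; exact absurd hus (not_le.mpr hsu)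
  have hzero : ∫⁻ u in Ioc s t, h (X u) = 0 := by
    have hae0 : ∀ᵐ (u : ℝ) ∂(volume.restrict (Ioc s t)), h (X u) = 0 := by
      rw [ae_restrict_iff' measurableSet_Ioc, ae_iff]
      refine measure_mono_null ?_ (measure_singleton t)
      intro u hu
      simp only [mem_setOf_eq, _root_.not_imp] at hu
      obtain ⟨⟨hsu, hut⟩, hne⟩ := hu
      by_contra hnt
      have hult : u < t := lt_of_le_of_ne hut (by simpa using hnt)
      exact hne (indicator_of_notMem (havoid u hsu hult) _)
    calc ∫⁻ u in Ioc s t, h (X u) = ∫⁻ _ in Ioc s t, 0 := lintegral_congr_ae hae0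
    _ = 0 := lintegral_zero
  have hEq : ∫⁻ z, h z * ENNReal.ofReal (L t z) = ∫⁻ z, h z * ENNReal.ofReal (L s z) := by
    rw [← h2, ← h1, hsplit, lintegral_union measurableSet_Ioc hdisj, hzero, add_zero]
  obtain ⟨M, hM⟩ : ∃ M, ∀ z ∈ Icc c d, L s z ≤ M := by
    rcases (Icc c d).eq_empty_or_nonempty with hcd | hcd
    · exact ⟨0, by rw [hcd]; simp⟩
    · obtain ⟨w, hw, hmax⟩ := isCompact_Icc.exists_isMaxOn hcd
        ((contL_snd hXL hs).continuousOn)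
      exact ⟨L s w, fun z hz => hmax hz⟩
  have hmeas_s : Measurable fun z => h z * ENNReal.ofReal (L s z) :=
    hmeas_h.mul (ENNReal.measurable_ofReal.comp (contL_snd hXL hs).measurable)
  have hmeas_t : Measurable fun z => h z * ENNReal.ofReal (L t z) :=
    hmeas_h.mul (ENNReal.measurable_ofReal.comp (contL_snd hXL ht).measurable)
  have hfin : ∫⁻ z, h z * ENNReal.ofReal (L s z) ≠ ⊤ := by
    have hb : ∀ z, h z * ENNReal.ofReal (L s z)
        ≤ (Icc c d).indicator (fun _ => ENNReal.ofReal M) z := by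
      intro z
      by_cases hz : z ∈ E
      · have hz' : z ∈ Icc c d := hEcd hz
        rw [hh, indicator_of_mem hz, indicator_of_mem hz', one_mul]
        exact ENNReal.ofReal_le_ofReal (hM z hz')
      · rw [hh, indicator_of_notMem hz, zero_mul]
        exact zero_le
    refine ne_top_of_le_ne_top ?_ (lintegral_mono hb)
    rw [lintegral_indicator_const measurableSet_Icc]
    exact ENNReal.mul_ne_top ENNReal.ofReal_ne_top measure_Icc_lt_top.ne
  have hle : ∀ z, h z * ENNReal.ofReal (L s z) ≤ h z * ENNReal.ofReal (L t z) := fun z =>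
    mul_le_mul_right (ENNReal.ofReal_le_ofReal (hmono z hs ht hst)) _
  have hsub0 : ∫⁻ z, (h z * ENNReal.ofReal (L t z) - h z * ENNReal.ofReal (L s z)) = 0 := by
    rw [lintegral_sub hmeas_s hfin (Filter.Eventually.of_forall hle), hEq, tsub_self]
  have hae := (lintegral_eq_zero_iff (hmeas_t.sub hmeas_s)).mp hsub0
  filter_upwards [hae] with z hz hzE
  have h1z : h z = 1 := indicator_of_mem hzE _
  rw [Pi.zero_apply] at hz
  have hle' : ENNReal.ofReal (L t z) ≤ ENNReal.ofReal (L s z) := by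
    have := tsub_eq_zero_iff_le.mp hz
    beta_reduce at this
    rwa [h1z, one_mul, one_mul] at this
  exact le_antisymm (hmono z hs ht hst)
    ((ENNReal.ofReal_le_ofReal_iff (hpos s hs z)).mp hle')

/-- If `X` avoids the level `y` on `[s,t)`, the occupation density at `y` is constant. -/
lemma occ_const (hJ : J.OrdConnected) (hXL : HasOccDensity J X L)
    {s t y : ℝ} (hs : s ∈ J) (ht : t ∈ J) (hst : s ≤ t)
    (havoid : ∀ u, s ≤ u → u < t → X u ≠ y) : L s y = L t y := by
  rcases eq_or_lt_of_le hst with rfl | hlt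
  · rfl
  have key : ∀ t' ∈ Ico s t, L s y = L t' y := by
    rintro t' ⟨hst', ht't⟩
    rcases eq_or_lt_of_le hst' with rfl | hlt'
    · rfl
    have ht'J : t' ∈ J := hJ.out hs ht ⟨hst', ht't.le⟩
    have hK : IsCompact (X '' Icc s t') :=
      (isCompact_Icc.image_of_continuousOn (hXL.1.mono (hJ.out hs ht'J)))
    have hyK : y ∈ (X '' Icc s t')ᶜ := by
      rintro ⟨u, ⟨hsu, hut'⟩, hXu⟩
      exact havoid u hsu (lt_of_le_of_lt hut' ht't) hXu
    obtain ⟨δ, hδpos, hδ⟩ := Metric.isOpen_iff.mp hK.isClosed.isOpen_compl y hyK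
    have hav : ∀ u, s < u → u < t' → X u ∉ Metric.ball y δ := fun u h1 h2 hb =>
      (hδ hb) (mem_image_of_mem X ⟨h1.le, h2.le⟩)
    have hball : Metric.ball y δ ⊆ Icc (y - δ) (y + δ) := by
      rw [Real.ball_eq_Ioo]; exact Ioo_subset_Icc_self
    have hae := occ_ae_eq_of_avoid hJ hXL hs ht'J hst' measurableSet_ball hball hav
    have hfy := cont_eq_zero_of_ae
      ((contL_snd hXL ht'J).sub (contL_snd hXL hs)) Metric.isOpen_ball
      (hae.mono fun z hz hzU => sub_eq_zero.mpr (hz hzU).symm) y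
      (subset_closure (Metric.mem_ball_self hδpos))
    have : L t' y - L s y = 0 := hfy
    linarith
  refine (left_lim_eq hlt
    (((contL_fst hXL y) t ht).mono (fun u hu => hJ.out hs ht ⟨hu.1, hu.2.le⟩)) ?_).symm
  intro u hu
  exact (key u hu).symm

/-- If `X` stays strictly above `x` on `(s,t)`, the occupation density below `x` is constant. -/
lemma occ_incr_side (hJ : J.OrdConnected) (hXL : HasOccDensity J X L)
    {s t x : ℝ} (hs : s ∈ J) (ht : t ∈ J) (hst : s ≤ t)
    (h : ∀ u, s < u → u < t → x < X u) : ∀ z ≤ x, L s z = L t z := by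
  have key : ∀ n : ℕ, ∀ᵐ (z : ℝ) ∂volume, z ∈ Ioo (x - (n+1)) x → L s z = L t z := by
    intro n
    refine occ_ae_eq_of_avoid hJ hXL hs ht hst measurableSet_Ioo Ioo_subset_Icc_self ?_
    intro u h1 h2 hmem
    exact absurd hmem.2 (not_lt.mpr (h u h1 h2).le)
  have hae : ∀ᵐ (z : ℝ) ∂volume, z ∈ Iio x → L s z = L t z := by
    filter_upwards [ae_all_iff.mpr key] with z hz hzx
    obtain ⟨n, hn⟩ : ∃ n : ℕ, x - (n+1) < z := by
      obtain ⟨n, hn⟩ := exists_nat_gt (x - z); exact ⟨n, by linarith⟩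
    exact hz n ⟨hn, hzx⟩
  intro z hz
  have := cont_eq_zero_of_ae ((contL_snd hXL ht).sub (contL_snd hXL hs)) isOpen_Iio
    (hae.mono fun w hw hwU => sub_eq_zero.mpr (hw hwU).symm) z (by rw [closure_Iio]; exact hz)
  have h0 : L t z - L s z = 0 := this
  linarith

/-- If `X` stays strictly above `x` before time `t`, the occupation density at or below
`x` vanishes at time `t`. -/
lemma occ_zero (hJ : J.OrdConnected) (hXL : HasOccDensity J X L)
    {t x : ℝ} (ht : t ∈ J)
    (h : ∀ s ∈ J, s < t → x < X s) : ∀ z ≤ x, L t z = 0 := by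
  have hpos := hXL.2.2.2.1
  have hocc := hXL.2.2.2.2
  set h1 : ℝ → ℝ≥0∞ := (Iio x).indicator (fun _ => 1) with hh1
  have hmeas : Measurable h1 := measurable_const.indicator measurableSet_Iio
  have he := hocc t ht h1 hmeas
  have hzero : ∫⁻ u in J ∩ Iic t, h1 (X u) = 0 := by
    have hae0 : ∀ᵐ (u : ℝ) ∂(volume.restrict (J ∩ Iic t)), h1 (X u) = 0 := by
      rw [ae_restrict_iff' (hJ.measurableSet.inter measurableSet_Iic), ae_iff]
      refine measure_mono_null ?_ (measure_singleton t)
      intro u hu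
      simp only [mem_setOf_eq, _root_.not_imp] at hu
      obtain ⟨⟨huJ, hut⟩, hne⟩ := hu
      by_contra hnt
      have hult : u < t := lt_of_le_of_ne hut (by simpa using hnt)
      refine hne (indicator_of_notMem ?_ _)
      exact not_lt.mpr (h u huJ hult).le
    calc ∫⁻ u in J ∩ Iic t, h1 (X u) = ∫⁻ _ in J ∩ Iic t, 0 := lintegral_congr_ae hae0
    _ = 0 := lintegral_zero
  rw [he] at hzero
  have hmeasg : Measurable fun z => h1 z * ENNReal.ofReal (L t z) :=
    hmeas.mul (ENNReal.measurable_ofReal.comp (contL_snd hXL ht).measurable)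
  have hae := (lintegral_eq_zero_iff hmeasg).mp hzero
  have hae' : ∀ᵐ (z : ℝ) ∂volume, z ∈ Iio x → L t z = 0 := by
    filter_upwards [hae] with z hz hzx
    rw [Pi.zero_apply] at hz
    rw [hh1, indicator_of_mem hzx, one_mul] at hz
    exact le_antisymm (ENNReal.ofReal_eq_zero.mp hz) (hpos t ht z)
  intro z hz
  exact cont_eq_zero_of_ae (contL_snd hXL ht) isOpen_Iio hae' z (by rw [closure_Iio]; exact hz)

end Aux

/-- deterministic version of the perfect flow property of Appendix A.
Under the accumulation property — whenever `X` visits level `x` during `[s,t)`,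
`L(t,x) > L(s,x)` — the local time flow satisfies the perfect flow property
`S_{r,y}(a) = S_{x,y}(S_{r,x}(a))` for all levels `r ≤ x ≤ y` and all `a ≥ 0`. -/
theorem perfect_flow_property
    (J : Set ℝ) (hJ : J.OrdConnected)
    (X : ℝ → ℝ) (L : ℝ → ℝ → ℝ) (hXL : HasOccDensity J X L)
    (haccum : ∀ x : ℝ, ∀ s ∈ J, ∀ t ∈ J, s < t →
      (∃ u, u ∈ J ∧ s ≤ u ∧ u < t ∧ X u = x) → L s x < L t x) :
    ∀ r x y a : ℝ, r ≤ x → x ≤ y → 0 ≤ a →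
      SflowE J L r y (ENNReal.ofReal a)
        = SflowE J L x y (SflowE J L r x (ENNReal.ofReal a)) := by
  intro r x y a hrx hxy ha
  have hX := hXL.1
  have hmono := hXL.2.2.1
  have hpos := hXL.2.2.2.1
  simp only [SflowE]
  set A := ENNReal.ofReal a with hAdef
  set Sr : Set ℝ := {t | t ∈ J ∧ A < ENNReal.ofReal (L t r)} with hSrdef
  have hTdef : tauENN J L r A = sInf ((fun t : ℝ => (t : EReal)) '' Sr) := rfl
  have hmin0 : ∀ t0 ∈ J, (∀ s ∈ J, ¬ s < t0) → ∀ z : ℝ, L t0 z = 0 := by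
    intro t0 ht0 hno z
    exact occ_zero hJ hXL ht0 (x := z) (fun s hs hst => absurd hst (hno s hs)) z le_rfl
  have hofeq : ∀ {s t : ℝ}, s ∈ J → t ∈ J →
      ENNReal.ofReal (L s x) = ENNReal.ofReal (L t x) → L s x = L t x := by
    intro s t hs ht hh
    exact (ENNReal.ofReal_eq_ofReal_iff (hpos s hs x) (hpos t ht x)).mp hh
  rcases Sr.eq_empty_or_nonempty with hSrE | ⟨t1, ht1⟩
  · -- the inverse local time is `+∞`; both sides are the full supremum
    have hT : tauENN J L r A = ⊤ := by rw [hTdef, hSrE, image_empty, sInf_empty]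
    rw [hT]
    have hbx : evalOccE J L x ⊤ = ⨆ t ∈ J, ENNReal.ofReal (L t x) := by
      rw [evalOccE, if_pos rfl]
    have hby : evalOccE J L y ⊤ = ⨆ t ∈ J, ENNReal.ofReal (L t y) := by
      rw [evalOccE, if_pos rfl]
    rw [hbx, hby]
    have hSxE : {t | t ∈ J ∧ (⨆ t ∈ J, ENNReal.ofReal (L t x)) < ENNReal.ofReal (L t x)}
        = (∅ : Set ℝ) := by
      apply eq_empty_iff_forall_notMem.mpr
      rintro t ⟨htJ, hlt⟩
      exact absurd (le_biSup (fun t => ENNReal.ofReal (L t x)) htJ) (not_le.mpr hlt)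
    have hT' : tauENN J L x (⨆ t ∈ J, ENNReal.ofReal (L t x)) = ⊤ := by
      rw [tauENN, hSxE, image_empty, sInf_empty]
    rw [hT', evalOccE, if_pos rfl]
  · have hTle : tauENN J L r A ≤ ((t1 : ℝ) : EReal) :=
      hTdef ▸ sInf_le (mem_image_of_mem _ ht1)
    have hTnetop : tauENN J L r A ≠ ⊤ := (lt_of_le_of_lt hTle (EReal.coe_lt_top t1)).ne
    by_cases hTJ : tauENN J L r A ≠ ⊥ ∧ (tauENN J L r A).toReal ∈ J
    · -- CASE A : the inverse local time is a point of `J`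
      obtain ⟨hTnb, htsJ⟩ := hTJ
      set ts := (tauENN J L r A).toReal with htsdef
      have hTeq : ((ts : ℝ) : EReal) = tauENN J L r A := EReal.coe_toReal hTnetop hTnb
      have hLHS : evalOccE J L y (tauENN J L r A) = ENNReal.ofReal (L ts y) := by
        rw [evalOccE, if_neg hTnetop, if_pos ⟨hTnb, htsJ⟩]
      have hbx : evalOccE J L x (tauENN J L r A) = ENNReal.ofReal (L ts x) := by
        rw [evalOccE, if_neg hTnetop, if_pos ⟨hTnb, htsJ⟩]
      have f2 : ENNReal.ofReal (L ts r) ≤ A := by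
        by_contra hcon
        push_neg at hcon
        have hLpos : 0 < L ts r := by
          rcases le_or_gt (L ts r) 0 with h0 | h0
          · rw [ENNReal.ofReal_eq_zero.mpr h0] at hcon
            exact absurd hcon (not_lt.mpr ((zero_le : 0 ≤ A)))
          · exact h0
        obtain ⟨s, hsJ, hsts⟩ : ∃ s ∈ J, s < ts := by
          by_contra hno
          push_neg at hno
          have := hmin0 ts htsJ (fun s hs => not_lt.mpr (hno s hs)) r
          rw [this] at hLpos; exact lt_irrefl 0 hLpos
        have hub : ∀ u ∈ Ico s ts, L u r ≤ a := by
          rintro u ⟨hsu, huts⟩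
          have huJ : u ∈ J := hJ.out hsJ htsJ ⟨hsu, huts.le⟩
          have hnot : u ∉ Sr := by
            intro huSr
            have hle : tauENN J L r A ≤ ((u : ℝ) : EReal) :=
              hTdef ▸ sInf_le (mem_image_of_mem _ huSr)
            rw [← hTeq] at hle
            exact absurd (EReal.coe_le_coe_iff.mp hle) (not_le.mpr huts)
          have h2 : ¬ A < ENNReal.ofReal (L u r) := fun hc => hnot ⟨huJ, hc⟩
          have h3 := not_lt.mp h2
          rw [hAdef] at h3
          exact (ENNReal.ofReal_le_ofReal_iff ha).mp h3
        have hcw : ContinuousWithinAt (fun u => L u r) (Ico s ts) ts :=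
          (((contL_fst hXL r) ts htsJ).mono (fun u hu => hJ.out hsJ htsJ ⟨hu.1, hu.2.le⟩))
        have hfin := left_lim_le hsts hcw hub
        rw [hAdef] at hcon
        exact absurd hcon (not_lt.mpr (ENNReal.ofReal_le_ofReal hfin))
      have f1 : ∀ t ∈ J, ts < t → A < ENNReal.ofReal (L t r) := by
        intro t ht hlt
        have hlt' : tauENN J L r A < ((t : ℝ) : EReal) := by
          rw [← hTeq]; exact_mod_cast hlt
        rw [hTdef] at hlt'
        obtain ⟨ee, heS, hlte⟩ := sInf_lt_iff.mp hlt'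
        obtain ⟨s, hsSr, rfl⟩ := heS
        exact lt_of_lt_of_le hsSr.2
          (ENNReal.ofReal_le_ofReal (hmono r hsSr.1 ht (EReal.coe_le_coe_iff.mp hlte.le)))
      rw [hLHS, hbx]
      set b := ENNReal.ofReal (L ts x) with hbdef
      set Sx : Set ℝ := {t | t ∈ J ∧ b < ENNReal.ofReal (L t x)} with hSxdef
      have hT'def : tauENN J L x b = sInf ((fun t : ℝ => (t : EReal)) '' Sx) := rfl
      have hSx_gt : ∀ t ∈ Sx, ts < t := by
        rintro t ⟨htJ, hblt⟩
        by_contra hle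
        push_neg at hle
        exact absurd hblt (not_lt.mpr (ENNReal.ofReal_le_ofReal (hmono x htJ htsJ hle)))
      rcases Sx.eq_empty_or_nonempty with hSxE | ⟨u1, hu1⟩
      · have hT' : tauENN J L x b = ⊤ := by rw [hT'def, hSxE, image_empty, sInf_empty]
        rw [hT', evalOccE, if_pos rfl]
        have hxconst : ∀ u ∈ J, ts ≤ u → L u x = L ts x := by
          intro u hu htsu
          have h1 : ¬ b < ENNReal.ofReal (L u x) := fun hc =>
            (eq_empty_iff_forall_notMem.mp hSxE u) ⟨hu, hc⟩
          exact le_antisymm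
            ((ENNReal.ofReal_le_ofReal_iff (hpos ts htsJ x)).mp (not_lt.mp h1))
            (hmono x htsJ hu htsu)
        have hconsty : ∀ t ∈ J, ts ≤ t → L t y = L ts y := by
          intro t ht htst
          rcases eq_or_lt_of_le htst with heq | hlt
          · rw [← heq]
          · have havx : ∀ u ∈ Ico ts t, X u ≠ x := by
              rintro u ⟨h1, h2⟩ hXu
              have huJ := hJ.out htsJ ht ⟨h1, h2.le⟩
              have hacc := haccum x u huJ t ht h2 ⟨u, huJ, le_rfl, h2, hXu⟩
              rw [hxconst u huJ h1, hxconst t ht htst] at hacc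
              exact lt_irrefl _ hacc
            have hseg : ∀ u ∈ Ico ts t, ∀ v ∈ Ico ts t, Icc u v ⊆ Ico ts t := by
              rintro u hu v hv w ⟨hw1, hw2⟩
              exact ⟨hu.1.trans hw1, lt_of_le_of_lt hw2 hv.2⟩
            have hRJ : Ico ts t ⊆ J := fun u hu => hJ.out htsJ ht ⟨hu.1, hu.2.le⟩
            rcases sign_dichotomy hX hRJ hseg havx with hlt' | hgt'
            · exact (occ_const hJ hXL htsJ ht htst
                (fun u h1 h2 => ne_of_lt (lt_of_lt_of_le (hlt' u ⟨h1, h2⟩) hxy))).symm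
            · exfalso
              have hmidJ : (ts + t)/2 ∈ J := hJ.out htsJ ht ⟨by linarith, by linarith⟩
              have h0 := occ_incr_side hJ hXL htsJ hmidJ (by linarith)
                (fun u hu1 hu2 => hgt' u ⟨hu1.le, by linarith⟩) r hrx
              have hf1 := f1 _ hmidJ (by linarith)
              rw [← h0] at hf1
              exact absurd hf1 (not_lt.mpr f2)
        apply le_antisymm
        · exact le_biSup (fun t => ENNReal.ofReal (L t y)) htsJ
        · refine iSup₂_le fun t ht => ?_
          rcases le_total ts t with h | h
          · rw [hconsty t ht h]
          · exact ENNReal.ofReal_le_ofReal (hmono y ht htsJ h)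
      · have htsu1 : ts < u1 := hSx_gt u1 hu1
        have hT'le : tauENN J L x b ≤ ((u1 : ℝ) : EReal) :=
          hT'def ▸ sInf_le (mem_image_of_mem _ hu1)
        have hT'ge : ((ts : ℝ) : EReal) ≤ tauENN J L x b := by
          rw [hT'def]
          refine le_sInf ?_
          rintro ee ⟨t, htSx, rfl⟩
          exact EReal.coe_le_coe_iff.mpr (hSx_gt t htSx).le
        have hT'nt : tauENN J L x b ≠ ⊤ := (lt_of_le_of_lt hT'le (EReal.coe_lt_top u1)).ne
        have hT'nb : tauENN J L x b ≠ ⊥ := by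
          intro hc; rw [hc] at hT'ge
          exact EReal.coe_ne_bot ts (le_bot_iff.mp hT'ge)
        set e := (tauENN J L x b).toReal with hedef
        have hT'eq : ((e : ℝ) : EReal) = tauENN J L x b := EReal.coe_toReal hT'nt hT'nb
        have htse : ts ≤ e := by
          rw [← hT'eq] at hT'ge; exact_mod_cast hT'ge
        have heu1 : e ≤ u1 := by
          rw [← hT'eq] at hT'le; exact_mod_cast hT'le
        have heJ : e ∈ J := hJ.out htsJ hu1.1 ⟨htse, heu1⟩
        have hRHS : evalOccE J L y (tauENN J L x b) = ENNReal.ofReal (L e y) := by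
          rw [evalOccE, if_neg hT'nt, if_pos ⟨hT'nb, heJ⟩]
        rw [hRHS]
        rcases eq_or_lt_of_le htse with heq | hlt
        · rw [← heq]
        · have hxconstlt : ∀ u ∈ J, ts ≤ u → u < e → L u x = L ts x := by
            intro u hu h1 h2
            have hnot : u ∉ Sx := by
              intro huSx
              have hle : tauENN J L x b ≤ ((u : ℝ) : EReal) :=
                hT'def ▸ sInf_le (mem_image_of_mem _ huSx)
              rw [← hT'eq] at hle
              exact absurd (EReal.coe_le_coe_iff.mp hle) (not_le.mpr h2)
            have h3 : ¬ b < ENNReal.ofReal (L u x) := fun hc => hnot ⟨hu, hc⟩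
            exact le_antisymm
              ((ENNReal.ofReal_le_ofReal_iff (hpos ts htsJ x)).mp (not_lt.mp h3))
              (hmono x htsJ hu h1)
          have havx : ∀ u ∈ Ico ts e, X u ≠ x := by
            rintro u ⟨h1, h2⟩ hXu
            have huJ := hJ.out htsJ heJ ⟨h1, h2.le⟩
            have hmidJ : (u + e)/2 ∈ J := hJ.out huJ heJ ⟨by linarith, by linarith⟩
            have hacc := haccum x u huJ _ hmidJ (by linarith) ⟨u, huJ, le_rfl, by linarith, hXu⟩
            rw [hxconstlt u huJ h1 h2,
              hxconstlt _ hmidJ (by linarith) (by linarith)] at hacc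
            exact lt_irrefl _ hacc
          have hseg : ∀ u ∈ Ico ts e, ∀ v ∈ Ico ts e, Icc u v ⊆ Ico ts e := by
            rintro u hu v hv w ⟨hw1, hw2⟩
            exact ⟨hu.1.trans hw1, lt_of_le_of_lt hw2 hv.2⟩
          have hRJ : Ico ts e ⊆ J := fun u hu => hJ.out htsJ heJ ⟨hu.1, hu.2.le⟩
          rcases sign_dichotomy hX hRJ hseg havx with hlt' | hgt'
          · have heqy := occ_const hJ hXL htsJ heJ htse
              (fun u h1 h2 => ne_of_lt (lt_of_lt_of_le (hlt' u ⟨h1, h2⟩) hxy))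
            rw [heqy]
          · exfalso
            have hmidJ : (ts + e)/2 ∈ J := hJ.out htsJ heJ ⟨by linarith, by linarith⟩
            have h0 := occ_incr_side hJ hXL htsJ hmidJ (by linarith)
              (fun u hu1 hu2 => hgt' u ⟨hu1.le, by linarith⟩) r hrx
            have hf1 := f1 _ hmidJ (by linarith)
            rw [← h0] at hf1
            exact absurd hf1 (not_lt.mpr f2)
    · -- CASE B : the inverse local time lies (weakly) below `J`
      have hevalT : ∀ w : ℝ, evalOccE J L w (tauENN J L r A)
          = ⨅ t ∈ J, ENNReal.ofReal (L t w) := by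
        intro w
        rw [evalOccE, if_neg hTnetop, if_neg hTJ]
      rw [hevalT y, hevalT x]
      have keyB : ∀ t ∈ J, A < ENNReal.ofReal (L t r) := by
        intro t ht
        have hlt : tauENN J L r A < ((t : ℝ) : EReal) := by
          rcases lt_trichotomy (tauENN J L r A) ((t : ℝ) : EReal) with h | h | h
          · exact h
          · exact absurd ⟨by rw [h]; exact EReal.coe_ne_bot t,
              by rw [h, EReal.toReal_coe]; exact ht⟩ hTJ
          · exfalso
            have hnb : tauENN J L r A ≠ ⊥ := by
              intro hc; rw [hc] at h; exact not_lt_bot h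
            have heq := EReal.coe_toReal hTnetop hnb
            refine hTJ ⟨hnb, hJ.out ht ht1.1 ⟨?_, ?_⟩⟩
            · rw [← heq] at h; exact_mod_cast h.le
            · have hle := hTdef ▸ sInf_le (mem_image_of_mem (fun t : ℝ => (t : EReal)) ht1)
              rw [← heq] at hle
              have hle' : (((tauENN J L r A).toReal : ℝ) : EReal) ≤ ((t1 : ℝ) : EReal) := hle
              exact EReal.coe_le_coe_iff.mp hle'
        rw [hTdef] at hlt
        obtain ⟨ee, heS, hlte⟩ := sInf_lt_iff.mp hlt
        obtain ⟨s, hsSr, rfl⟩ := heS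
        exact lt_of_lt_of_le hsSr.2
          (ENNReal.ofReal_le_ofReal (hmono r hsSr.1 ht (EReal.coe_le_coe_iff.mp hlte.le)))
      have noMin : ∀ t ∈ J, ∃ s ∈ J, s < t := by
        intro t ht
        by_contra hno
        push_neg at hno
        have h0 := hmin0 t ht (fun s hs => not_lt.mpr (hno s hs)) r
        have h2 := keyB t ht
        rw [h0, ENNReal.ofReal_zero] at h2
        exact absurd h2 (not_lt.mpr ((zero_le : 0 ≤ A)))
      set m := ⨅ t ∈ J, ENNReal.ofReal (L t x) with hmdef
      set Sx : Set ℝ := {t | t ∈ J ∧ m < ENNReal.ofReal (L t x)} with hSxdef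
      have hT'def : tauENN J L x m = sInf ((fun t : ℝ => (t : EReal)) '' Sx) := rfl
      by_cases hT'top : tauENN J L x m = ⊤
      · rw [hT'top, evalOccE, if_pos rfl]
        have hSxE : Sx = ∅ := by
          apply eq_empty_iff_forall_notMem.mpr
          rintro t htSx
          have hle : tauENN J L x m ≤ ((t : ℝ) : EReal) :=
            hT'def ▸ sInf_le (mem_image_of_mem _ htSx)
          rw [hT'top] at hle
          exact EReal.coe_ne_top t (top_le_iff.mp hle)
        have hxconst : ∀ t ∈ J, ENNReal.ofReal (L t x) = m := by
          intro t ht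
          refine le_antisymm ?_ (iInf₂_le t ht)
          by_contra hc
          push_neg at hc
          exact (eq_empty_iff_forall_notMem.mp hSxE t) ⟨ht, hc⟩
        have hyconst : ∀ s ∈ J, ∀ t ∈ J, s ≤ t → L s y = L t y := by
          intro s hs t ht hst
          rcases eq_or_lt_of_le hst with heq | hlt
          · rw [heq]
          · have havx : ∀ u ∈ {u | u ∈ J ∧ u < t}, X u ≠ x := by
              rintro u ⟨huJ, hut⟩ hXu
              have hacc := haccum x u huJ t ht hut ⟨u, huJ, le_rfl, hut, hXu⟩
              rw [hofeq huJ ht ((hxconst u huJ).trans (hxconst t ht).symm)] at hacc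
              exact lt_irrefl _ hacc
            have hseg : ∀ u ∈ {u | u ∈ J ∧ u < t}, ∀ v ∈ {u | u ∈ J ∧ u < t},
                Icc u v ⊆ {u | u ∈ J ∧ u < t} := by
              rintro u hu v hv w ⟨hw1, hw2⟩
              exact ⟨hJ.out hu.1 hv.1 ⟨hw1, hw2⟩, lt_of_le_of_lt hw2 hv.2⟩
            rcases sign_dichotomy hX (fun u hu => hu.1) hseg havx with hlt' | hgt'
            · exact occ_const hJ hXL hs ht hst (fun u h1 h2 =>
                ne_of_lt (lt_of_lt_of_le (hlt' u ⟨hJ.out hs ht ⟨h1, h2.le⟩, h2⟩) hxy))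
            · exfalso
              have h0 := occ_zero hJ hXL hs (x := x)
                (fun u hu hus => hgt' u ⟨hu, hus.trans hlt⟩) r hrx
              have h2 := keyB s hs
              rw [h0, ENNReal.ofReal_zero] at h2
              exact absurd h2 (not_lt.mpr ((zero_le : 0 ≤ A)))
        apply le_antisymm
        · calc ⨅ t ∈ J, ENNReal.ofReal (L t y) ≤ ENNReal.ofReal (L t1 y) := iInf₂_le t1 ht1.1
          _ ≤ ⨆ t ∈ J, ENNReal.ofReal (L t y) := le_biSup (fun t => ENNReal.ofReal (L t y)) ht1.1
        · refine iSup₂_le fun t ht => le_iInf₂ fun s hs => ?_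
          rcases le_total t s with h | h
          · rw [hyconst t ht s hs h]
          · rw [hyconst s hs t ht h]
      · by_cases hT'J : tauENN J L x m ≠ ⊥ ∧ (tauENN J L x m).toReal ∈ J
        · obtain ⟨hT'nb, heJ⟩ := hT'J
          set e := (tauENN J L x m).toReal with hedef
          have hT'eq : ((e : ℝ) : EReal) = tauENN J L x m := EReal.coe_toReal hT'top hT'nb
          have hRHS : evalOccE J L y (tauENN J L x m) = ENNReal.ofReal (L e y) := by
            rw [evalOccE, if_neg hT'top, if_pos ⟨hT'nb, heJ⟩]
          rw [hRHS]
          obtain ⟨s0, hs0J, hs0e⟩ := noMin e heJ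
          have hxconstlt : ∀ u ∈ J, u < e → ENNReal.ofReal (L u x) = m := by
            intro u hu h2
            refine le_antisymm ?_ (iInf₂_le u hu)
            have hnot : u ∉ Sx := by
              intro huSx
              have hle : tauENN J L x m ≤ ((u : ℝ) : EReal) :=
                hT'def ▸ sInf_le (mem_image_of_mem _ huSx)
              rw [← hT'eq] at hle
              exact absurd (EReal.coe_le_coe_iff.mp hle) (not_le.mpr h2)
            exact not_lt.mp (fun hc => hnot ⟨hu, hc⟩)
          have havx : ∀ u ∈ {u | u ∈ J ∧ u < e}, X u ≠ x := by
            rintro u ⟨huJ, hue⟩ hXu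
            have hmidJ : (u + e)/2 ∈ J := hJ.out huJ heJ ⟨by linarith, by linarith⟩
            have hacc := haccum x u huJ _ hmidJ (by linarith) ⟨u, huJ, le_rfl, by linarith, hXu⟩
            rw [hofeq huJ hmidJ ((hxconstlt u huJ hue).trans
              (hxconstlt _ hmidJ (by linarith)).symm)] at hacc
            exact lt_irrefl _ hacc
          have hseg : ∀ u ∈ {u | u ∈ J ∧ u < e}, ∀ v ∈ {u | u ∈ J ∧ u < e},
              Icc u v ⊆ {u | u ∈ J ∧ u < e} := by
            rintro u hu v hv w ⟨hw1, hw2⟩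
            exact ⟨hJ.out hu.1 hv.1 ⟨hw1, hw2⟩, lt_of_le_of_lt hw2 hv.2⟩
          rcases sign_dichotomy hX (fun u hu => hu.1) hseg havx with hlt' | hgt'
          · have hconsty : ∀ s ∈ J, s < e → L s y = L e y := by
              intro s hs hse
              exact occ_const hJ hXL hs heJ hse.le (fun u h1 h2 =>
                ne_of_lt (lt_of_lt_of_le (hlt' u ⟨hJ.out hs heJ ⟨h1, h2.le⟩, h2⟩) hxy))
            apply le_antisymm
            · calc ⨅ t ∈ J, ENNReal.ofReal (L t y) ≤ ENNReal.ofReal (L s0 y) :=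
                iInf₂_le s0 hs0J
              _ = ENNReal.ofReal (L e y) := by rw [hconsty s0 hs0J hs0e]
            · refine le_iInf₂ fun t ht => ?_
              rcases lt_or_ge t e with h | h
              · rw [hconsty t ht h]
              · exact ENNReal.ofReal_le_ofReal (hmono y heJ ht h)
          · exfalso
            have h0 := occ_zero hJ hXL hs0J (x := x)
              (fun u hu hus => hgt' u ⟨hu, hus.trans hs0e⟩) r hrx
            have h2 := keyB s0 hs0J
            rw [h0, ENNReal.ofReal_zero] at h2
            exact absurd h2 (not_lt.mpr ((zero_le : 0 ≤ A)))
        · rw [evalOccE, if_neg hT'top, if_neg hT'J]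
end
end
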